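/- arXiv:2402.06033 — 8 statements merged into one kernel-verified Lean document; each statement's English description precedes it below -/
import Mathlib

section
/- Let L > 0 and let {z^k} satisfy z^{k+1} = (1/(k+2)) z^0 + ((k+1)/(k+2)) z^k - ((k+1)/(L(k+2))) \tilde{z}^k. Then for k ≥ 1, ‖z^{k+1} - z^k‖² ≤ (2(k+1)²/(L²(k+2)²)) ‖\tilde{z}^k‖² + (2k/(L²(k+1)²(k+2)²)) Σ_{i=0}^{k-1} (i+1)² ‖\tilde{z}^i‖², and for k = 0, ‖z^1 - z^0‖² = (1/(4L²)) ‖\tilde{z}^0‖². -/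
/-!
Multiplying the recurrence by `L (k + 2)` makes it telescope:
`L (k + 1) (z⁰ - zᵏ) = ∑_{i<k} (i + 1) z̃ⁱ`. Hence the step `zᵏ⁺¹ - zᵏ` is an explicit combination
of `z̃ᵏ` and this weighted sum, and the bound follows from `‖a - b‖² ≤ 2‖a‖² + 2‖b‖²` and
Cauchy–Schwarz for the `k` summands.
-/

open Finset

lemma norm_sub_sq_le {E : Type*} [SeminormedAddCommGroup E] (a b : E) :
    ‖a - b‖ ^ 2 ≤ 2 * ‖a‖ ^ 2 + 2 * ‖b‖ ^ 2 := by
  calc ‖a - b‖ ^ 2 ≤ (‖a‖ + ‖b‖) ^ 2 := by gcongr; exact norm_sub_le a b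
    _ ≤ 2 * (‖a‖ ^ 2 + ‖b‖ ^ 2) := add_sq_le
    _ = 2 * ‖a‖ ^ 2 + 2 * ‖b‖ ^ 2 := by ring

lemma norm_sum_sq_le_card_mul {ι E : Type*} [SeminormedAddCommGroup E] (s : Finset ι)
    (f : ι → E) : ‖∑ i ∈ s, f i‖ ^ 2 ≤ #s * ∑ i ∈ s, ‖f i‖ ^ 2 := by
  calc ‖∑ i ∈ s, f i‖ ^ 2 ≤ (∑ i ∈ s, ‖f i‖) ^ 2 := by gcongr; exact norm_sum_le s f
    _ ≤ #s * ∑ i ∈ s, ‖f i‖ ^ 2 := sq_sum_le_card_mul_sum_sq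

section Halpern

variable {E : Type*} [AddCommGroup E] [Module ℝ E] {L : ℝ} {z ztil : ℕ → E}

lemma halpern_smul_initial_sub (hL : L ≠ 0)
    (hrec : ∀ k : ℕ, z (k + 1) = (1 / ((k : ℝ) + 2)) • z 0 + (((k : ℝ) + 1) / ((k : ℝ) + 2)) • z k
      - (((k : ℝ) + 1) / (L * ((k : ℝ) + 2))) • ztil k) (k : ℕ) :
    (L * ((k : ℝ) + 1)) • (z 0 - z k) = ∑ i ∈ range k, ((i : ℝ) + 1) • ztil i := by
  induction k with
  | zero => simp
  | succ k ih =>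
    have hk : (k : ℝ) + 2 ≠ 0 := by positivity
    rw [hrec k, sum_range_succ, ← ih]
    push_cast
    match_scalars <;> field_simp <;> ring

lemma halpern_succ_sub (hL : L ≠ 0)
    (hrec : ∀ k : ℕ, z (k + 1) = (1 / ((k : ℝ) + 2)) • z 0 + (((k : ℝ) + 1) / ((k : ℝ) + 2)) • z k
      - (((k : ℝ) + 1) / (L * ((k : ℝ) + 2))) • ztil k) (k : ℕ) :
    z (k + 1) - z k = (1 / (L * ((k : ℝ) + 1) * ((k : ℝ) + 2))) •
        ∑ i ∈ range k, ((i : ℝ) + 1) • ztil i - (((k : ℝ) + 1) / (L * ((k : ℝ) + 2))) • ztil k := by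
  have hk₁ : (k : ℝ) + 1 ≠ 0 := by positivity
  have hk₂ : (k : ℝ) + 2 ≠ 0 := by positivity
  rw [← halpern_smul_initial_sub hL hrec k, hrec k]
  match_scalars <;> field_simp
  ring

end Halpern

theorem stmt_4_general {Z : Type*} [NormedAddCommGroup Z] [InnerProductSpace ℝ Z]
    (L : ℝ) (hL : 0 < L) (z ztil : ℕ → Z)
    (hrec : ∀ k : ℕ, z (k + 1) = (1 / ((k : ℝ) + 2)) • z 0 + (((k : ℝ) + 1) / ((k : ℝ) + 2)) • z k
      - (((k : ℝ) + 1) / (L * ((k : ℝ) + 2))) • ztil k) :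
    ‖z 1 - z 0‖ ^ 2 = (1 / (4 * L ^ 2)) * ‖ztil 0‖ ^ 2 ∧
    ∀ k : ℕ, 1 ≤ k →
      ‖z (k + 1) - z k‖ ^ 2 ≤
        (2 * ((k : ℝ) + 1) ^ 2 / (L ^ 2 * ((k : ℝ) + 2) ^ 2)) * ‖ztil k‖ ^ 2 +
          (2 * (k : ℝ) / (L ^ 2 * ((k : ℝ) + 1) ^ 2 * ((k : ℝ) + 2) ^ 2)) *
            ∑ i ∈ Finset.range k, ((i : ℝ) + 1) ^ 2 * ‖ztil i‖ ^ 2 := by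
  have hrec' := halpern_succ_sub hL.ne' hrec
  constructor
  · rw [hrec' 0]
    simp only [range_zero, sum_empty, smul_zero, zero_sub, norm_neg, norm_smul,
      Real.norm_eq_abs, mul_pow, sq_abs]
    field_simp
    ring
  · intro k _
    set c₁ : ℝ := 1 / (L * ((k : ℝ) + 1) * ((k : ℝ) + 2))
    set c₂ : ℝ := ((k : ℝ) + 1) / (L * ((k : ℝ) + 2))
    have hsum : ‖∑ i ∈ range k, ((i : ℝ) + 1) • ztil i‖ ^ 2
        ≤ k * ∑ i ∈ range k, ((i : ℝ) + 1) ^ 2 * ‖ztil i‖ ^ 2 := by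
      simpa only [card_range, norm_smul, Real.norm_eq_abs, mul_pow, sq_abs]
        using norm_sum_sq_le_card_mul (range k) fun i => ((i : ℝ) + 1) • ztil i
    calc ‖z (k + 1) - z k‖ ^ 2
        ≤ 2 * c₁ ^ 2 * ‖∑ i ∈ range k, ((i : ℝ) + 1) • ztil i‖ ^ 2 + 2 * c₂ ^ 2 * ‖ztil k‖ ^ 2 := by
          rw [hrec' k]
          refine (norm_sub_sq_le _ _).trans_eq ?_
          simp only [norm_smul, Real.norm_eq_abs, mul_pow, sq_abs]
          ring
      _ ≤ 2 * c₁ ^ 2 * (k * ∑ i ∈ range k, ((i : ℝ) + 1) ^ 2 * ‖ztil i‖ ^ 2)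
            + 2 * c₂ ^ 2 * ‖ztil k‖ ^ 2 := by gcongr
      _ = _ := by simp only [c₁, c₂]; field_simp; ring

theorem stmt_4 {Z : Type*} [NormedAddCommGroup Z] [InnerProductSpace ℝ Z]
    [FiniteDimensional ℝ Z]
    (L : ℝ) (hL : 0 < L) (z ztil : ℕ → Z)
    (hrec : ∀ k : ℕ, z (k + 1) = (1 / ((k : ℝ) + 2)) • z 0 + (((k : ℝ) + 1) / ((k : ℝ) + 2)) • z k
      - (((k : ℝ) + 1) / (L * ((k : ℝ) + 2))) • ztil k) :
    ‖z 1 - z 0‖ ^ 2 = (1 / (4 * L ^ 2)) * ‖ztil 0‖ ^ 2 ∧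
    ∀ k : ℕ, 1 ≤ k →
      ‖z (k + 1) - z k‖ ^ 2 ≤
        (2 * ((k : ℝ) + 1) ^ 2 / (L ^ 2 * ((k : ℝ) + 2) ^ 2)) * ‖ztil k‖ ^ 2 +
          (2 * (k : ℝ) / (L ^ 2 * ((k : ℝ) + 1) ^ 2 * ((k : ℝ) + 2) ^ 2)) *
            ∑ i ∈ Finset.range k, ((i : ℝ) + 1) ^ 2 * ‖ztil i‖ ^ 2 :=
  stmt_4_general L hL z ztil hrec
end

section
/- Let G : Z → Z be (1/L)-co-coercive with L > 0, i.e., ⟨G(z₁) - G(z₂), z₁ - z₂⟩ ≥ (1/L)‖G(z₁) - G(z₂)‖² for all z₁, z₂. Let {z^k} satisfy z^{k+1} = β_k z^0 + (1-β_k) z^k - ((1-β_k)/L) \tilde{z}^k with β_k ∈ (0,1). Then for all k ≥ 0: (1/(2L))‖G(z^{k+1})‖² - (β_k/(1-β_k))⟨G(z^{k+1}), z^0 - z^{k+1}⟩ ≤ ((1-2β_k)/(2L))‖G(z^k)‖² - β_k ⟨G(z^k), z^0 - z^k⟩ + (β_k/L)⟨G(z^k), G(z^k) - \tilde{z}^k⟩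 + (1/(2L))‖G(z^k) - \tilde{z}^k‖². -/
/-!
Write one step as `z^{k+1} - z^k = β (z^0 - z^k) - ((1 - β)/L) z̃^k`. Then the right-hand side
minus the left-hand side is, identically, the co-coercivity slack
`⟪G z^{k+1} - G z^k, z^{k+1} - z^k⟫ - (1/L)‖G z^{k+1} - G z^k‖²` plus the square
`(1/(2L))‖G z^{k+1} - 2 G z^k + z̃^k‖²`, and both are nonnegative.
-/

open scoped RealInnerProductSpace

section Halpern

variable {E : Type*} [NormedAddCommGroup E] [InnerProductSpace ℝ E]

lemma halpern_step_sub_self {x₀ x x' w : E} {β η : ℝ}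
    (h : x' = β • x₀ + (1 - β) • x - η • w) :
    x' - x = β • (x₀ - x) - η • w := by
  rw [h]; module

lemma halpern_anchor_sub_step {x₀ x x' w : E} {β η : ℝ}
    (h : x' = β • x₀ + (1 - β) • x - η • w) :
    x₀ - x' = (1 - β) • (x₀ - x) + η • w := by
  rw [h]; module

lemma halpern_potential_gap (g g' u w : E) {β L : ℝ} (hL : L ≠ 0) (hβ : β ≠ 1) :
    ((1 - 2 * β) / (2 * L)) * ‖g‖ ^ 2 - β * ⟪g, u⟫ + (β / L) * ⟪g, g - w⟫ +
        (1 / (2 * L)) * ‖g - w‖ ^ 2 -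
      ((1 / (2 * L)) * ‖g'‖ ^ 2 -
        (β / (1 - β)) * ⟪g', (1 - β) • u + ((1 - β) / L) • w⟫) =
    (⟪g' - g, β • u - ((1 - β) / L) • w⟫ - (1 / L) * ‖g' - g‖ ^ 2) +
      (1 / (2 * L)) * ‖(g' - g) - (g - w)‖ ^ 2 := by
  have h1β : 1 - β ≠ 0 := sub_ne_zero.2 hβ.symm
  rw [norm_sub_sq_real (g' - g), norm_sub_sq_real g', norm_sub_sq_real g]
  simp only [inner_sub_left, inner_sub_right, inner_add_right, real_inner_smul_right,
    real_inner_self_eq_norm_sq, real_inner_comm g g']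
  field_simp
  ring

theorem halpern_potential_le {G : E → E} {L β : ℝ} (hL : 0 < L) (hβ : β < 1)
    {x₀ x x' w : E} (hG : ⟪G x' - G x, x' - x⟫ ≥ (1 / L) * ‖G x' - G x‖ ^ 2)
    (h : x' = β • x₀ + (1 - β) • x - ((1 - β) / L) • w) :
    (1 / (2 * L)) * ‖G x'‖ ^ 2 - (β / (1 - β)) * ⟪G x', x₀ - x'⟫ ≤
      ((1 - 2 * β) / (2 * L)) * ‖G x‖ ^ 2 - β * ⟪G x, x₀ - x⟫ +
        (β / L) * ⟪G x, G x - w⟫ + (1 / (2 * L)) * ‖G x - w‖ ^ 2 := by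
  rw [halpern_step_sub_self h] at hG
  have hgap := halpern_potential_gap (G x) (G x') (x₀ - x) w hL.ne' hβ.ne
  have hsq : 0 ≤ (1 / (2 * L)) * ‖(G x' - G x) - (G x - w)‖ ^ 2 := by positivity
  rw [halpern_anchor_sub_step h]
  linarith

end Halpern

theorem stmt_5_general {Z : Type*} [NormedAddCommGroup Z] [InnerProductSpace ℝ Z]
    (L : ℝ) (hL : 0 < L) (G : Z → Z)
    (hG : ∀ z₁ z₂ : Z, ⟪G z₁ - G z₂, z₁ - z₂⟫ ≥ (1 / L) * ‖G z₁ - G z₂‖ ^ 2)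
    (z ztil : ℕ → Z) (β : ℕ → ℝ)
    (hβ : ∀ k, β k ∈ Set.Ioo (0 : ℝ) 1)
    (hrec : ∀ k, z (k + 1) = β k • z 0 + (1 - β k) • z k - ((1 - β k) / L) • ztil k) :
    ∀ k : ℕ,
      (1 / (2 * L)) * ‖G (z (k + 1))‖ ^ 2 -
          (β k / (1 - β k)) * ⟪G (z (k + 1)), z 0 - z (k + 1)⟫ ≤
        ((1 - 2 * β k) / (2 * L)) * ‖G (z k)‖ ^ 2 - β k * ⟪G (z k), z 0 - z k⟫ +
          (β k / L) * ⟪G (z k), G (z k) - ztil k⟫ +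
          (1 / (2 * L)) * ‖G (z k) - ztil k‖ ^ 2 := fun k =>
  halpern_potential_le hL (hβ k).2 (hG _ _) (hrec k)

theorem stmt_5 {Z : Type*} [NormedAddCommGroup Z] [InnerProductSpace ℝ Z]
    [FiniteDimensional ℝ Z]
    (L : ℝ) (hL : 0 < L) (G : Z → Z)
    (hG : ∀ z₁ z₂ : Z, ⟪G z₁ - G z₂, z₁ - z₂⟫ ≥ (1 / L) * ‖G z₁ - G z₂‖ ^ 2)
    (z ztil : ℕ → Z) (β : ℕ → ℝ)
    (hβ : ∀ k, β k ∈ Set.Ioo (0 : ℝ) 1)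
    (hrec : ∀ k, z (k + 1) = β k • z 0 + (1 - β k) • z k - ((1 - β k) / L) • ztil k) :
    ∀ k : ℕ,
      (1 / (2 * L)) * ‖G (z (k + 1))‖ ^ 2 -
          (β k / (1 - β k)) * ⟪G (z (k + 1)), z 0 - z (k + 1)⟫ ≤
        ((1 - 2 * β k) / (2 * L)) * ‖G (z k)‖ ^ 2 - β k * ⟪G (z k), z 0 - z k⟫ +
          (β k / L) * ⟪G (z k), G (z k) - ztil k⟫ +
          (1 / (2 * L)) * ‖G (z k) - ztil k‖ ^ 2 :=
  stmt_5_general L hL G hG z ztil β hβ hrec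
end

section
/- Let G : Z → Z be (1/L)-co-coercive with L > 0 and let {z^k} satisfy the inexact Halpern iteration z^{k+1} = (1/(k+2)) z^0 + ((k+1)/(k+2)) z^k - ((k+1)/(L(k+2))) \tilde{z}^k. Define the potential L_k := (k(k+1)/(2L))‖G(z^k)‖² - (k+1)⟨G(z^k), z^0 - z^k⟩. Then for all k ≥ 0, L_{k+1} ≤ L_k + (1/(12L))‖G(z^k)‖² + (4(k+1)²/L)‖G(z^k) - \tilde{z}^k‖². -/
/-!
Write `a = G z^{k+1}`, `b = G z^k`, `u = z^0 - z^k` and `e = b - z̃^k`. The recursion gives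
`(k+2)(z^{k+1} - z^k) = u - ((k+1)/L) z̃^k` and `(k+2)(z^0 - z^{k+1}) = (k+1)(u + z̃^k / L)`, so
co-coercivity of `G` between `z^{k+1}` and `z^k` bounds `L (L_{k+1} - L_k)` by
`(k+1)(k+2)(⟪a - b, e⟫ - ‖a - b‖²/2) + (k+1)⟪b, e⟫`; in the exact case `e = 0` this is a
descent. Young's inequality bounds the first term by `(k+1)(k+2)‖e‖²/2` and the second by
`‖b‖²/12 + 3(k+1)²‖e‖²`, and `(k+1)(k+2)/2 + 3(k+1)² ≤ 4(k+1)²`.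
-/

open scoped RealInnerProductSpace

section

variable {E : Type*} [NormedAddCommGroup E] [InnerProductSpace ℝ E]

theorem two_mul_inner_le_norm_sq_add_norm_sq (x y : E) : 2 * ⟪x, y⟫ ≤ ‖x‖ ^ 2 + ‖y‖ ^ 2 := by
  linarith [norm_sub_sq_real x y, sq_nonneg ‖x - y‖]

theorem halpern_step_smul_sub {L K : ℝ} (hL : L ≠ 0) (hK : K + 2 ≠ 0) {x₀ x x' t : E}
    (h : x' = (1 / (K + 2)) • x₀ + ((K + 1) / (K + 2)) • x - ((K + 1) / (L * (K + 2))) • t) :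
    (K + 2) • (x' - x) = (x₀ - x) - ((K + 1) / L) • t ∧
      (K + 2) • (x₀ - x') = (K + 1) • (x₀ - x + L⁻¹ • t) := by
  subst h
  constructor <;> match_scalars <;> field_simp <;> ring

theorem halpern_potential_step {L K : ℝ} (hL : 0 < L) (hK : 0 ≤ K) (a b u t : E)
    (hco : (K + 2) * ‖a - b‖ ^ 2 ≤ L * ⟪a - b, u - ((K + 1) / L) • t⟫) :
    (K + 1) * (K + 2) / (2 * L) * ‖a‖ ^ 2 - (K + 1) * ⟪a, u + L⁻¹ • t⟫ ≤
      K * (K + 1) / (2 * L) * ‖b‖ ^ 2 - (K + 1) * ⟪b, u⟫ + 1 / (12 * L) * ‖b‖ ^ 2 +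
        4 * (K + 1) ^ 2 / L * ‖b - t‖ ^ 2 := by
  set e := b - t
  have ht : t = b - e := by simp [e]
  have hdescent : L * ((K + 1) * (K + 2) / (2 * L) * ‖a‖ ^ 2 - (K + 1) * ⟪a, u + L⁻¹ • t⟫
      - (K * (K + 1) / (2 * L) * ‖b‖ ^ 2 - (K + 1) * ⟪b, u⟫)) ≤
      (K + 1) * (K + 2) * (⟪a - b, e⟫ - ‖a - b‖ ^ 2 / 2) + (K + 1) * ⟪b, e⟫ := by
    rw [ht] at hco ⊢
    simp only [inner_sub_left, inner_sub_right, inner_add_right, real_inner_smul_right,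
      real_inner_self_eq_norm_sq, norm_sub_sq_real] at hco ⊢
    field_simp at hco ⊢
    linarith [mul_le_mul_of_nonneg_left hco (by linarith : (0:ℝ) ≤ K + 1)]
  have hyoung₁ := two_mul_inner_le_norm_sq_add_norm_sq (a - b) e
  have hyoung₂ := two_mul_inner_le_norm_sq_add_norm_sq b ((6 * (K + 1)) • e)
  rw [real_inner_smul_right, norm_smul, mul_pow, Real.norm_eq_abs, sq_abs] at hyoung₂
  have hslack : 0 ≤ K * (K + 1) / 2 * ‖e‖ ^ 2 := by positivity
  have hscaled : L * ((K + 1) * (K + 2) / (2 * L) * ‖a‖ ^ 2 - (K + 1) * ⟪a, u + L⁻¹ • t⟫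
      - (K * (K + 1) / (2 * L) * ‖b‖ ^ 2 - (K + 1) * ⟪b, u⟫)) ≤
      L * (1 / (12 * L) * ‖b‖ ^ 2 + 4 * (K + 1) ^ 2 / L * ‖e‖ ^ 2) := by
    have hrhs : L * (1 / (12 * L) * ‖b‖ ^ 2 + 4 * (K + 1) ^ 2 / L * ‖e‖ ^ 2) =
        ‖b‖ ^ 2 / 12 + 4 * (K + 1) ^ 2 * ‖e‖ ^ 2 := by
      field_simp
    rw [hrhs]
    linarith [mul_le_mul_of_nonneg_left hyoung₁ (by positivity : (0:ℝ) ≤ (K + 1) * (K + 2))]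
  linarith [le_of_mul_le_mul_left hscaled hL]

end

theorem stmt_6_general {Z : Type*} [NormedAddCommGroup Z] [InnerProductSpace ℝ Z]
    (L : ℝ) (hL : 0 < L) (G : Z → Z)
    (hG : ∀ z₁ z₂ : Z, ⟪G z₁ - G z₂, z₁ - z₂⟫ ≥ (1 / L) * ‖G z₁ - G z₂‖ ^ 2)
    (z ztil : ℕ → Z)
    (hrec : ∀ k : ℕ, z (k + 1) = (1 / ((k : ℝ) + 2)) • z 0 + (((k : ℝ) + 1) / ((k : ℝ) + 2)) • z k
      - (((k : ℝ) + 1) / (L * ((k : ℝ) + 2))) • ztil k)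
    (Lk : ℕ → ℝ)
    (hLk : ∀ k : ℕ, Lk k =
      ((k : ℝ) * ((k : ℝ) + 1) / (2 * L)) * ‖G (z k)‖ ^ 2 -
        ((k : ℝ) + 1) * ⟪G (z k), z 0 - z k⟫) :
    ∀ k : ℕ, Lk (k + 1) ≤ Lk k + (1 / (12 * L)) * ‖G (z k)‖ ^ 2 +
      (4 * ((k : ℝ) + 1) ^ 2 / L) * ‖G (z k) - ztil k‖ ^ 2 := by
  intro k
  obtain ⟨hstep, hanchor⟩ := halpern_step_smul_sub hL.ne' (by positivity) (hrec k)
  have hco : ((k : ℝ) + 2) * ‖G (z (k + 1)) - G (z k)‖ ^ 2 ≤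
      L * ⟪G (z (k + 1)) - G (z k), z 0 - z k - (((k : ℝ) + 1) / L) • ztil k⟫ := by
    calc ((k : ℝ) + 2) * ‖G (z (k + 1)) - G (z k)‖ ^ 2
        = L * ((k + 2) * ((1 / L) * ‖G (z (k + 1)) - G (z k)‖ ^ 2)) := by field_simp
      _ ≤ L * ((k + 2) * ⟪G (z (k + 1)) - G (z k), z (k + 1) - z k⟫) := by
        gcongr; exact hG _ _
      _ = _ := by rw [← real_inner_smul_right, hstep]
  have hpot := halpern_potential_step hL k.cast_nonneg _ _ _ _ hco
  have hanchor_inner : ((k : ℝ) + 1) * ⟪G (z (k + 1)), z 0 - z k + L⁻¹ • ztil k⟫ =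
      ((k : ℝ) + 2) * ⟪G (z (k + 1)), z 0 - z (k + 1)⟫ := by
    rw [← real_inner_smul_right, ← hanchor, real_inner_smul_right]
  rw [hanchor_inner] at hpot
  rw [hLk, hLk]
  push_cast
  convert hpot using 3 <;> ring

theorem stmt_6 {Z : Type*} [NormedAddCommGroup Z] [InnerProductSpace ℝ Z]
    [FiniteDimensional ℝ Z]
    (L : ℝ) (hL : 0 < L) (G : Z → Z)
    (hG : ∀ z₁ z₂ : Z, ⟪G z₁ - G z₂, z₁ - z₂⟫ ≥ (1 / L) * ‖G z₁ - G z₂‖ ^ 2)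
    (z ztil : ℕ → Z)
    (hrec : ∀ k : ℕ, z (k + 1) = (1 / ((k : ℝ) + 2)) • z 0 + (((k : ℝ) + 1) / ((k : ℝ) + 2)) • z k
      - (((k : ℝ) + 1) / (L * ((k : ℝ) + 2))) • ztil k)
    (Lk : ℕ → ℝ)
    (hLk : ∀ k : ℕ, Lk k =
      ((k : ℝ) * ((k : ℝ) + 1) / (2 * L)) * ‖G (z k)‖ ^ 2 -
        ((k : ℝ) + 1) * ⟪G (z k), z 0 - z k⟫) :
    ∀ k : ℕ, Lk (k + 1) ≤ Lk k + (1 / (12 * L)) * ‖G (z k)‖ ^ 2 +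
      (4 * ((k : ℝ) + 1) ^ 2 / L) * ‖G (z k) - ztil k‖ ^ 2 :=
  stmt_6_general L hL G hG z ztil hrec Lk hLk
end

section
/- Let G : Z → Z be (1/L)-co-coercive and let {z^k} be generated by the inexact Halpern iteration z^{k+1} = (1/(k+2)) z^0 + ((k+1)/(k+2)) z^k - ((k+1)/(L(k+2))) \tilde{z}^k, where ‖G(z^k) - \tilde{z}^k‖ ≤ γ_k for tolerances γ_k ≥ 0. If z* satisfies G(z*) = 0, then for all k ≥ 0, ‖G(z^k)‖² ≤ (7L‖z^0 - z*‖ + 10√(Σ_{i=0}^{k-1}(i+1)²γ_i²))² / ((k+1)(k+2)). -/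
open scoped RealInnerProductSpace
open Finset

/-!
Along the exact Halpern iteration the potential
`V_k = k (k+1) ‖G z_k‖² + 2 L (k+1) ⟪G z_k, z_k - z_0⟫` is nonincreasing, by co-coercivity of `G`
between consecutive iterates; an inexact step raises it by at most
`2 (k+1) γ_k ‖G z_{k+1}‖ + (k+1)² γ_k²`. Co-coercivity at `z*` bounds `V_k` below by
`(k+1)(k+2) ‖G z_k‖² - 2 L ‖z_0 - z*‖ (k+1) ‖G z_k‖`, so `u_k = (k+1) ‖G z_k‖` satisfies a
discrete Bihari-type inequality `u_k² ≤ c u_k + ∑_{i<k} b_i u_{i+1} + S_k` with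
`c = 2 L ‖z_0 - z*‖`, `b_i = 2 γ_i`, `S_k = ∑_{i<k} (i+1)² γ_i²`, whence
`u_k ≤ c + ∑_{i<k} b_i + √S_k`.
Finally `∑_{i<k} γ_i ≤ √2 √S_k` by Cauchy–Schwarz and `∑ 1/(i+1)² ≤ 2`.
-/

section Potential

variable {Z : Type*} [NormedAddCommGroup Z] [InnerProductSpace ℝ Z]

def IsCocoercive (L : ℝ) (G : Z → Z) : Prop :=
  ∀ z₁ z₂, (1 / L) * ‖G z₁ - G z₂‖ ^ 2 ≤ ⟪G z₁ - G z₂, z₁ - z₂⟫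

noncomputable def halpernStep (L : ℝ) (z₀ : Z) (k : ℕ) (x d : Z) : Z :=
  (1 / ((k : ℝ) + 2)) • z₀ + (((k : ℝ) + 1) / ((k : ℝ) + 2)) • x
    - (((k : ℝ) + 1) / (L * ((k : ℝ) + 2))) • d

def halpernPotential (L : ℝ) (G : Z → Z) (z₀ : Z) (k : ℕ) (x : Z) : ℝ :=
  k * (k + 1) * ‖G x‖ ^ 2 + 2 * L * (k + 1) * ⟪G x, x - z₀⟫

variable {L : ℝ} {G : Z → Z}

lemma IsCocoercive.sq_norm_sub_le (hL : 0 < L) (hG : IsCocoercive L G) (z₁ z₂ : Z) :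
    ‖G z₁ - G z₂‖ ^ 2 ≤ L * ⟪G z₁ - G z₂, z₁ - z₂⟫ :=
  (div_le_iff₀' hL).1 (by simpa [div_eq_inv_mul] using hG z₁ z₂)

lemma halpernPotential_succ_le (hL : 0 < L) (hG : IsCocoercive L G) {k : ℕ} {z₀ x x' d : Z}
    (hx' : x' = halpernStep L z₀ k x d) :
    halpernPotential L G z₀ (k + 1) x' ≤ halpernPotential L G z₀ k x
      - (k + 1) * (k + 2) * ‖G x' - G x‖ ^ 2
      - 2 * (k + 1) * ⟪((k : ℝ) + 2) • G x' - ((k : ℝ) + 1) • G x, d - G x⟫ := by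
  have hstep : (L * (k + 2)) • (x' - x) = L • (z₀ - x) - ((k : ℝ) + 1) • d := by
    rw [hx', halpernStep]; match_scalars <;> field_simp; ring
  have hanchor :
      (L * (k + 2)) • (x' - z₀) = (L * (k + 1)) • (x - z₀) - ((k : ℝ) + 1) • d := by
    rw [hx', halpernStep]; match_scalars <;> field_simp; ring
  have hco : (k + 2) * ‖G x' - G x‖ ^ 2 ≤ ⟪G x' - G x, (L * (k + 2)) • (x' - x)⟫ := by
    rw [real_inner_smul_right]
    nlinarith [hG.sq_norm_sub_le hL x' x]
  have hpot :
      2 * L * ((k : ℝ) + 2) * ⟪G x', x' - z₀⟫ = 2 * ⟪G x', (L * (k + 2)) • (x' - z₀)⟫ := by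
    rw [real_inner_smul_right]; ring
  rw [hstep] at hco
  unfold halpernPotential
  push_cast
  rw [show ((k : ℝ) + 1 + 1) = k + 2 by ring, hpot, hanchor]
  simp only [inner_sub_left, inner_sub_right, real_inner_smul_left, real_inner_smul_right,
    real_inner_self_eq_norm_sq, norm_sub_sq_real] at hco ⊢
  rw [real_inner_comm (G x) (G x')]
  rw [real_inner_comm (G x) (G x')] at hco
  linear_combination 2 * ((k : ℝ) + 1) * hco

lemma halpernPotential_succ_le_add (hL : 0 < L) (hG : IsCocoercive L G)
    {k : ℕ} {z₀ x x' d : Z} {γ : ℝ} (hd : ‖G x - d‖ ≤ γ)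
    (hx' : x' = halpernStep L z₀ k x d) :
    halpernPotential L G z₀ (k + 1) x' ≤ halpernPotential L G z₀ k x
      + 2 * (k + 1) * γ * ‖G x'‖ + (k + 1) ^ 2 * γ ^ 2 := by
  have herr : -⟪((k : ℝ) + 2) • G x' - ((k : ℝ) + 1) • G x, d - G x⟫
      ≤ (‖G x'‖ + (k + 1) * ‖G x' - G x‖) * γ := calc
    _ ≤ ‖((k : ℝ) + 2) • G x' - ((k : ℝ) + 1) • G x‖ * ‖d - G x‖ :=
      (neg_le_abs _).trans (abs_real_inner_le_norm _ _)
    _ ≤ (‖G x'‖ + (k + 1) * ‖G x' - G x‖) * γ := by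
      rw [show ((k : ℝ) + 2) • G x' - ((k : ℝ) + 1) • G x
        = G x' + ((k : ℝ) + 1) • (G x' - G x) by module, norm_sub_rev]
      refine mul_le_mul ((norm_add_le _ _).trans_eq ?_) hd (norm_nonneg _) (by positivity)
      rw [norm_smul, Real.norm_of_nonneg (by positivity)]
  -- `(k+2) t² - 2 (k+1) γ t + (k+1) γ² = t² + (k+1) (t - γ)²`
  have hquad : 2 * ((k : ℝ) + 1) ^ 2 * γ * ‖G x' - G x‖
      - (k + 1) * (k + 2) * ‖G x' - G x‖ ^ 2 ≤ (k + 1) ^ 2 * γ ^ 2 := by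
    nlinarith [sq_nonneg (‖G x' - G x‖ - γ), sq_nonneg ‖G x' - G x‖]
  have := halpernPotential_succ_le hL hG hx'
  nlinarith

lemma halpernPotential_le_sum (hL : 0 < L) (hG : IsCocoercive L G) {z ztil : ℕ → Z} {γ : ℕ → ℝ}
    (hrec : ∀ k, z (k + 1) = halpernStep L (z 0) k (z k) (ztil k))
    (hin : ∀ k, ‖G (z k) - ztil k‖ ≤ γ k) (n : ℕ) :
    halpernPotential L G (z 0) n (z n) ≤
      ∑ i ∈ range n, (2 * (i + 1) * γ i * ‖G (z (i + 1))‖ + (i + 1) ^ 2 * γ i ^ 2) := by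
  induction n with
  | zero => simp [halpernPotential]
  | succ n ih =>
    rw [sum_range_succ]
    linarith [halpernPotential_succ_le_add hL hG (hin n) (hrec n)]

lemma sq_mul_le_halpernPotential_add (hL : 0 < L) (hG : IsCocoercive L G) {zs : Z} (hzs : G zs = 0)
    (z₀ x : Z) (k : ℕ) :
    (k + 1) * (k + 2) * ‖G x‖ ^ 2 ≤
      halpernPotential L G z₀ k x + 2 * (L * ‖z₀ - zs‖) * ((k + 1) * ‖G x‖) := by
  have hco : ‖G x‖ ^ 2 ≤ L * ⟪G x, x - zs⟫ := by
    simpa [hzs] using hG.sq_norm_sub_le hL x zs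
  have hcs : -(‖G x‖ * ‖z₀ - zs‖) ≤ ⟪G x, zs - z₀⟫ := by
    rw [norm_sub_rev]
    exact neg_le_of_abs_le (abs_real_inner_le_norm _ _)
  have hsplit : ⟪G x, x - z₀⟫ = ⟪G x, x - zs⟫ + ⟪G x, zs - z₀⟫ := by
    rw [← inner_add_right, sub_add_sub_cancel]
  unfold halpernPotential
  rw [hsplit]
  nlinarith [mul_le_mul_of_nonneg_left hcs (by positivity : (0 : ℝ) ≤ 2 * L * (k + 1))]

lemma halpern_sq_norm_le (hL : 0 < L) (hG : IsCocoercive L G) {z ztil : ℕ → Z} {γ : ℕ → ℝ}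
    (hrec : ∀ k, z (k + 1) = halpernStep L (z 0) k (z k) (ztil k))
    (hin : ∀ k, ‖G (z k) - ztil k‖ ≤ γ k) {zs : Z} (hzs : G zs = 0) (n : ℕ) :
    ((n : ℝ) + 1) * (n + 2) * ‖G (z n)‖ ^ 2 ≤
      2 * (L * ‖z 0 - zs‖) * ((n + 1) * ‖G (z n)‖)
        + ∑ i ∈ range n, 2 * γ i * ((((i + 1 : ℕ) : ℝ) + 1) * ‖G (z (i + 1))‖)
        + ∑ i ∈ range n, ((i : ℝ) + 1) ^ 2 * γ i ^ 2 := by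
  have hsum : ∑ i ∈ range n, 2 * ((i : ℝ) + 1) * γ i * ‖G (z (i + 1))‖ ≤
      ∑ i ∈ range n, 2 * γ i * ((((i + 1 : ℕ) : ℝ) + 1) * ‖G (z (i + 1))‖) :=
    sum_le_sum fun i _ ↦ by
      push_cast
      nlinarith [(norm_nonneg _).trans (hin i), norm_nonneg (G (z (i + 1)))]
  have hpot := halpernPotential_le_sum hL hG hrec hin n
  rw [sum_add_distrib] at hpot
  linarith [sq_mul_le_halpernPotential_add hL hG hzs (z 0) (z n) n]

end Potential

lemma le_add_sqrt_of_sq_le_mul_add {u a S : ℝ} (ha : 0 ≤ a) (hS : 0 ≤ S)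
    (h : u ^ 2 ≤ a * u + S) : u ≤ a + √S := by
  by_contra! hlt
  have hsq := Real.sq_sqrt hS
  have hsqrt := Real.sqrt_nonneg S
  nlinarith [mul_pos (sub_pos.2 hlt) (by linarith : 0 < u)]

section Bihari

variable {u b S : ℕ → ℝ} {c : ℝ}

lemma monotone_add_sum_add_sqrt (hb : ∀ n, 0 ≤ b n) (hS : Monotone S) :
    Monotone fun n ↦ c + ∑ i ∈ range n, b i + √(S n) := fun m n hmn ↦ by
  dsimp only
  gcongr
  exacts [fun i _ _ ↦ hb i, hS hmn]

lemma le_add_sum_add_sqrt_of_sq_le (hb : ∀ n, 0 ≤ b n) (hc : 0 ≤ c) (hS₀ : ∀ n, 0 ≤ S n)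
    (hS : Monotone S) (h : ∀ n, u n ^ 2 ≤ c * u n + ∑ i ∈ range n, b i * u (i + 1) + S n)
    (n : ℕ) : u n ≤ c + ∑ i ∈ range n, b i + √(S n) := by
  induction n using Nat.strong_induction_on with
  | _ n ih =>
  by_contra! hlt
  have hprev : ∀ i ∈ range n, u (i + 1) ≤ u n := by
    intro i hi
    rcases (show i + 1 ≤ n from mem_range.1 hi).lt_or_eq with hi | hi
    · exact (ih _ hi).trans ((monotone_add_sum_add_sqrt hb hS hi.le).trans hlt.le)
    · rw [hi]
  have hsum : ∑ i ∈ range n, b i * u (i + 1) ≤ (∑ i ∈ range n, b i) * u n := by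
    rw [sum_mul]
    exact sum_le_sum fun i hi ↦ mul_le_mul_of_nonneg_left (hprev i hi) (hb i)
  have hB : 0 ≤ c + ∑ i ∈ range n, b i := add_nonneg hc (sum_nonneg fun i _ ↦ hb i)
  exact hlt.not_ge (le_add_sqrt_of_sq_le_mul_add hB (hS₀ n) (by linarith [h n]))

lemma mul_add_sum_add_le_sq (hb : ∀ n, 0 ≤ b n) (hc : 0 ≤ c) (hS₀ : ∀ n, 0 ≤ S n)
    (hS : Monotone S) (h : ∀ n, u n ^ 2 ≤ c * u n + ∑ i ∈ range n, b i * u (i + 1) + S n)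
    (n : ℕ) : c * u n + ∑ i ∈ range n, b i * u (i + 1) + S n ≤
      (c + ∑ i ∈ range n, b i + √(S n)) ^ 2 := by
  set M := c + ∑ i ∈ range n, b i + √(S n)
  have hM : ∀ m ≤ n, u m ≤ M := fun m hm ↦
    (le_add_sum_add_sqrt_of_sq_le hb hc hS₀ hS h m).trans (monotone_add_sum_add_sqrt hb hS hm)
  have hsum : ∑ i ∈ range n, b i * u (i + 1) ≤ (∑ i ∈ range n, b i) * M := by
    rw [sum_mul]
    exact sum_le_sum fun i hi ↦ mul_le_mul_of_nonneg_left (hM _ (mem_range.1 hi)) (hb i)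
  have hsqrt : √(S n) ≤ M := by
    have : 0 ≤ ∑ i ∈ range n, b i := sum_nonneg fun i _ ↦ hb i
    linarith
  have hS_le : S n ≤ √(S n) * M := calc
    S n = √(S n) * √(S n) := (Real.mul_self_sqrt (hS₀ n)).symm
    _ ≤ √(S n) * M := mul_le_mul_of_nonneg_left hsqrt (Real.sqrt_nonneg _)
  calc c * u n + ∑ i ∈ range n, b i * u (i + 1) + S n
      ≤ c * M + (∑ i ∈ range n, b i) * M + √(S n) * M := by
        gcongr
        exact hM n le_rfl
    _ = M ^ 2 := by ring

end Bihari

lemma sum_le_sqrt_two_mul_sqrt (γ : ℕ → ℝ) (k : ℕ) :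
    ∑ i ∈ range k, γ i ≤ √2 * √(∑ i ∈ range k, ((i : ℝ) + 1) ^ 2 * γ i ^ 2) := by
  have hinv : ∑ i ∈ range k, (((i : ℝ) + 1) ^ 2)⁻¹ ≤ 2 := by
    have h := sum_Ioo_inv_sq_le (α := ℝ) 0 (k + 1)
    rw [← Ico_succ_left_eq_Ioo, sum_Ico_eq_sum_range] at h
    simpa [add_comm] using h
  calc ∑ i ∈ range k, γ i = ∑ i ∈ range k, ((i : ℝ) + 1)⁻¹ * ((i + 1) * γ i) :=
        sum_congr rfl fun i _ ↦ by field_simp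
    _ ≤ √(∑ i ∈ range k, ((i : ℝ) + 1)⁻¹ ^ 2) * √(∑ i ∈ range k, ((i + 1) * γ i) ^ 2) :=
        Real.sum_mul_le_sqrt_mul_sqrt _ _ _
    _ ≤ √2 * √(∑ i ∈ range k, ((i : ℝ) + 1) ^ 2 * γ i ^ 2) := by
        simp_rw [inv_pow, mul_pow]
        gcongr

theorem stmt_7_general {Z : Type*} [NormedAddCommGroup Z] [InnerProductSpace ℝ Z]
    (L : ℝ) (hL : 0 < L) (G : Z → Z)
    (hG : ∀ z₁ z₂ : Z, ⟪G z₁ - G z₂, z₁ - z₂⟫ ≥ (1 / L) * ‖G z₁ - G z₂‖ ^ 2)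
    (z ztil : ℕ → Z) (γ : ℕ → ℝ)
    (hrec : ∀ k : ℕ, z (k + 1) = (1 / ((k : ℝ) + 2)) • z 0 + (((k : ℝ) + 1) / ((k : ℝ) + 2)) • z k
      - (((k : ℝ) + 1) / (L * ((k : ℝ) + 2))) • ztil k)
    (hin : ∀ k : ℕ, ‖G (z k) - ztil k‖ ≤ γ k)
    (zs : Z) (hzs : G zs = 0) :
    ∀ k : ℕ, ‖G (z k)‖ ^ 2 ≤
      (7 * L * ‖z 0 - zs‖ +
          10 * Real.sqrt (∑ i ∈ Finset.range k, ((i : ℝ) + 1) ^ 2 * γ i ^ 2)) ^ 2 /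
        (((k : ℝ) + 1) * ((k : ℝ) + 2)) := by
  intro k
  have hγ : ∀ i, 0 ≤ γ i := fun i ↦ (norm_nonneg _).trans (hin i)
  have hmaster := halpern_sq_norm_le hL hG hrec hin hzs
  have hbound := mul_add_sum_add_le_sq (u := fun n ↦ ((n : ℝ) + 1) * ‖G (z n)‖)
    (b := fun i ↦ 2 * γ i) (fun i ↦ mul_nonneg zero_le_two (hγ i)) (by positivity)
    (fun n ↦ sum_nonneg fun i _ ↦ by positivity)
    (fun m n hmn ↦ sum_le_sum_of_subset_of_nonneg (range_mono hmn) fun i _ _ ↦ by positivity)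
    (fun n ↦ le_trans (by nlinarith [norm_nonneg (G (z n))]) (hmaster n)) k
  have hΓ := sum_le_sqrt_two_mul_sqrt γ k
  have hΓ₀ : 0 ≤ ∑ i ∈ range k, γ i := sum_nonneg fun i _ ↦ hγ i
  have hsqrt2 : √2 ≤ 2 := by nlinarith [Real.sq_sqrt (zero_le_two (α := ℝ)), Real.sqrt_nonneg 2]
  rw [le_div_iff₀ (by positivity)]
  calc ‖G (z k)‖ ^ 2 * (((k : ℝ) + 1) * ((k : ℝ) + 2)) ≤ _ := by linarith [hmaster k]
    _ ≤ _ := hbound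
    _ ≤ _ := by
      rw [← mul_sum]
      refine pow_le_pow_left₀ (by positivity) ?_ 2
      nlinarith [Real.sqrt_nonneg (∑ i ∈ range k, ((i : ℝ) + 1) ^ 2 * γ i ^ 2),
        mul_nonneg hL.le (norm_nonneg (z 0 - zs))]

theorem stmt_7 {Z : Type*} [NormedAddCommGroup Z] [InnerProductSpace ℝ Z]
    [FiniteDimensional ℝ Z]
    (L : ℝ) (hL : 0 < L) (G : Z → Z)
    (hG : ∀ z₁ z₂ : Z, ⟪G z₁ - G z₂, z₁ - z₂⟫ ≥ (1 / L) * ‖G z₁ - G z₂‖ ^ 2)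
    (z ztil : ℕ → Z) (γ : ℕ → ℝ) (hγ : ∀ k, 0 ≤ γ k)
    (hrec : ∀ k : ℕ, z (k + 1) = (1 / ((k : ℝ) + 2)) • z 0 + (((k : ℝ) + 1) / ((k : ℝ) + 2)) • z k
      - (((k : ℝ) + 1) / (L * ((k : ℝ) + 2))) • ztil k)
    (hin : ∀ k : ℕ, ‖G (z k) - ztil k‖ ≤ γ k)
    (zs : Z) (hzs : G zs = 0) :
    ∀ k : ℕ, ‖G (z k)‖ ^ 2 ≤
      (7 * L * ‖z 0 - zs‖ +
          10 * Real.sqrt (∑ i ∈ Finset.range k, ((i : ℝ) + 1) ^ 2 * γ i ^ 2)) ^ 2 /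
        (((k : ℝ) + 1) * ((k : ℝ) + 2)) :=
  stmt_7_general L hL G hG z ztil γ hrec hin zs hzs
end

section
/- Let {a_k}, {b_k} be sequences of nonnegative reals with b_k nondecreasing, and D ≥ 0. Suppose a_0 ≤ D and for all k ≥ 1, a_k² ≤ (1/(3k(k+1))) Σ_{i=0}^{k-1} a_i² + (48/((k+1)(k+2))) b_k + (24 D²/((k+1)(k+2))). Then for all k ≥ 1, a_k² ≤ (7D + 10√(b_k))² / ((k+1)(k+2)). -/
/-!
Set `c k = (7D + 10√(b k))²`, which is nondecreasing and satisfies `96 b k + 48 D² ≤ c k`.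
By strong induction `a k² ≤ c k / ((k+1)(k+2))` for every `k`: the induction hypothesis and the
telescoping sum `∑_{i<k} 1/((i+1)(i+2)) = k/(k+1)` bound the averaged term of the recursion by
`c k / (3(k+1)²) ≤ c k / (2(k+1)(k+2))` (this uses `k ≥ 1`), and the two remaining terms
contribute at most the other half `c k / (2(k+1)(k+2))`.
-/

open Finset

lemma sum_range_one_div_succ_mul_succ_succ (n : ℕ) :
    ∑ i ∈ range n, (1 : ℝ) / (((i : ℝ) + 1) * ((i : ℝ) + 2)) = n / ((n : ℝ) + 1) := by
  induction n with
  | zero => simp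
  | succ n ih =>
    rw [sum_range_succ, ih]
    push_cast
    field_simp
    ring

lemma sum_range_le_of_le_div_succ_mul_succ_succ {x c : ℕ → ℝ} (hc : Monotone c) {k : ℕ}
    (hx : ∀ i < k, x i ≤ c i / (((i : ℝ) + 1) * ((i : ℝ) + 2))) :
    ∑ i ∈ range k, x i ≤ c k * (k / ((k : ℝ) + 1)) := by
  rw [← sum_range_one_div_succ_mul_succ_succ, mul_sum]
  refine sum_le_sum fun i hi => ?_
  have hik : i < k := mem_range.mp hi
  calc x i ≤ c i / (((i : ℝ) + 1) * ((i : ℝ) + 2)) := hx i hik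
    _ ≤ c k / (((i : ℝ) + 1) * ((i : ℝ) + 2)) := by gcongr; exact hc hik.le
    _ = c k * (1 / (((i : ℝ) + 1) * ((i : ℝ) + 2))) := by rw [mul_one_div]

lemma one_div_mul_le_half_div_of_le_mul_div {S C K : ℝ} (hK : 1 ≤ K) (hC : 0 ≤ C)
    (hS : S ≤ C * (K / (K + 1))) :
    1 / (3 * K * (K + 1)) * S ≤ C / (2 * ((K + 1) * (K + 2))) :=
  calc 1 / (3 * K * (K + 1)) * S ≤ 1 / (3 * K * (K + 1)) * (C * (K / (K + 1))) := by
        gcongr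
    _ = C / (3 * (K + 1) ^ 2) := by field_simp
    _ ≤ C / (2 * ((K + 1) * (K + 2))) :=
        div_le_div_of_nonneg_left hC (by positivity) (by nlinarith)

lemma le_div_succ_mul_succ_succ_of_rec (x c : ℕ → ℝ) (hc : Monotone c) (hc0 : ∀ k, 0 ≤ c k)
    (h0 : x 0 ≤ c 0 / 2)
    (hrec : ∀ k : ℕ, 1 ≤ k →
      x k ≤ 1 / (3 * (k : ℝ) * ((k : ℝ) + 1)) * ∑ i ∈ range k, x i +
        c k / (2 * (((k : ℝ) + 1) * ((k : ℝ) + 2)))) :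
    ∀ k : ℕ, x k ≤ c k / (((k : ℝ) + 1) * ((k : ℝ) + 2)) := by
  intro k
  induction k using Nat.strong_induction_on with
  | _ k ih =>
    rcases Nat.eq_zero_or_pos k with rfl | hk
    · norm_num; linarith
    have hK : (1 : ℝ) ≤ k := by exact_mod_cast hk
    have hsum := sum_range_le_of_le_div_succ_mul_succ_succ hc ih
    have havg := one_div_mul_le_half_div_of_le_mul_div hK (hc0 k) hsum
    calc x k ≤ c k / (2 * (((k : ℝ) + 1) * ((k : ℝ) + 2))) +
          c k / (2 * (((k : ℝ) + 1) * ((k : ℝ) + 2))) := by linarith [hrec k hk]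
      _ = c k / (((k : ℝ) + 1) * ((k : ℝ) + 2)) := by field_simp; ring

lemma monotone_sq_add_mul_sqrt {D : ℝ} (hD : 0 ≤ D) {b : ℕ → ℝ} (hb : Monotone b) :
    Monotone fun k => (7 * D + 10 * Real.sqrt (b k)) ^ 2 := fun _ _ hij => by
  dsimp only
  gcongr
  exact hb hij

lemma le_sq_add_mul_sqrt {D b : ℝ} (hD : 0 ≤ D) (hb : 0 ≤ b) :
    96 * b + 48 * D ^ 2 ≤ (7 * D + 10 * Real.sqrt b) ^ 2 := by
  have hsq := Real.sq_sqrt hb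
  nlinarith [mul_nonneg hD (Real.sqrt_nonneg b)]

theorem stmt_9 (a b : ℕ → ℝ) (D : ℝ) (hD : 0 ≤ D)
    (ha : ∀ k, 0 ≤ a k) (hb : ∀ k, 0 ≤ b k) (hbmono : Monotone b)
    (h0 : a 0 ≤ D)
    (hrec : ∀ k : ℕ, 1 ≤ k →
      a k ^ 2 ≤ (1 / (3 * (k : ℝ) * ((k : ℝ) + 1))) * ∑ i ∈ Finset.range k, a i ^ 2 +
        (48 / (((k : ℝ) + 1) * ((k : ℝ) + 2))) * b k +
        24 * D ^ 2 / (((k : ℝ) + 1) * ((k : ℝ) + 2))) :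
    ∀ k : ℕ, 1 ≤ k →
      a k ^ 2 ≤ (7 * D + 10 * Real.sqrt (b k)) ^ 2 / (((k : ℝ) + 1) * ((k : ℝ) + 2)) := by
  intro k _
  refine le_div_succ_mul_succ_succ_of_rec (fun k => a k ^ 2) _
    (monotone_sq_add_mul_sqrt hD hbmono) (fun _ => sq_nonneg _) ?_ (fun k hk => ?_) k
  · have hc := le_sq_add_mul_sqrt hD (hb 0)
    nlinarith [ha 0, hb 0]
  · have hc := le_sq_add_mul_sqrt hD (hb k)
    set P : ℝ := ((k : ℝ) + 1) * ((k : ℝ) + 2)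
    have hrest : 48 / P * b k + 24 * D ^ 2 / P ≤ (7 * D + 10 * Real.sqrt (b k)) ^ 2 / (2 * P) :=
      calc 48 / P * b k + 24 * D ^ 2 / P = (48 * b k + 24 * D ^ 2) / P := by ring
        _ ≤ (7 * D + 10 * Real.sqrt (b k)) ^ 2 / 2 / P := by gcongr; linarith
        _ = (7 * D + 10 * Real.sqrt (b k)) ^ 2 / (2 * P) := by rw [div_div]
    linarith [hrec k hk]
end

section
/- Let F : Z → Z be (1/L)-co-coercive (L > 0) and E : Z → 2^Z be maximal monotone with resolvent J_{αE} = (I + αE)^{-1}. For 0 < α < 4/L, the mapping G(z) := (1/α)(z - J_{αE}(z - α F(z))) is (α(4 - αL)/4)-co-coercive, i.e., ⟨G(z₁) - G(z₂), z₁ - z₂⟩ ≥ (α(4-αL)/4)‖G(z₁) - G(z₂)‖² for all z₁, z₂ ∈ Z. -/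
/-!
Writing `x = z - α F z`, the identity `J x = z - α G z` gives `x - J x = α (G z - F z)`.
Firm nonexpansiveness of `J` says exactly that `x - J x` is monotone against `J x`, so
`⟪g - f, d - α g⟫ ≥ 0` for the differences `d, f, g` of `z`, `F z`, `G z`. Expanding,
`⟪g, d⟫ ≥ α ‖g‖² + ⟪f, d⟫ - α ⟪f, g⟫`, and co-coercivity of `F` together with
`(1/L) ‖f - (α L / 2) g‖² ≥ 0` bounds the last two terms below by `-(α² L / 4) ‖g‖²`.
-/

open scoped RealInnerProductSpace

section

variable {Z : Type*} [NormedAddCommGroup Z] [InnerProductSpace ℝ Z]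

theorem inner_sub_apply_nonneg_of_firmlyNonexpansive {J : Z → Z}
    (hJ : ∀ x y : Z, ⟪J x - J y, x - y⟫ ≥ ‖J x - J y‖ ^ 2) (x y : Z) :
    0 ≤ ⟪(x - J x) - (y - J y), J x - J y⟫ := by
  have hxy : (x - J x) - (y - J y) = (x - y) - (J x - J y) := by abel
  rw [hxy, inner_sub_left, real_inner_comm, real_inner_self_eq_norm_sq]
  exact sub_nonneg.mpr (hJ x y)

theorem inner_forwardBackward_nonneg {F J G : Z → Z}
    (hJ : ∀ x y : Z, ⟪J x - J y, x - y⟫ ≥ ‖J x - J y‖ ^ 2)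
    {α : ℝ} (hα : 0 < α) (hG : ∀ z, G z = (1 / α) • (z - J (z - α • F z))) (z₁ z₂ : Z) :
    0 ≤ ⟪(G z₁ - G z₂) - (F z₁ - F z₂), (z₁ - z₂) - α • (G z₁ - G z₂)⟫ := by
  have hJG : ∀ z, J (z - α • F z) = z - α • G z := fun z => by
    rw [hG, smul_smul, mul_one_div_cancel hα.ne', one_smul, sub_sub_cancel]
  have hres : ∀ z, (z - α • F z) - J (z - α • F z) = α • (G z - F z) := fun z => by
    rw [hJG, smul_sub]; abel
  have h := inner_sub_apply_nonneg_of_firmlyNonexpansive hJ (z₁ - α • F z₁) (z₂ - α • F z₂)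
  rw [hres, hres, hJG, hJG, ← smul_sub, real_inner_smul_left] at h
  have hdiff : (G z₁ - F z₁) - (G z₂ - F z₂) = (G z₁ - G z₂) - (F z₁ - F z₂) := by abel
  have hJdiff : (z₁ - α • G z₁) - (z₂ - α • G z₂) = (z₁ - z₂) - α • (G z₁ - G z₂) := by
    rw [smul_sub]; abel
  rw [hdiff, hJdiff] at h
  exact nonneg_of_mul_nonneg_right h hα

theorem mul_inner_le_inv_mul_norm_sq_add {L : ℝ} (hL : 0 < L) (α : ℝ) (f g : Z) :
    α * ⟪f, g⟫ ≤ (1 / L) * ‖f‖ ^ 2 + α ^ 2 * L / 4 * ‖g‖ ^ 2 := by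
  have hsq : 0 ≤ ‖f - (α * L / 2) • g‖ ^ 2 := sq_nonneg _
  rw [norm_sub_sq_real, real_inner_smul_right, norm_smul, mul_pow, Real.norm_eq_abs,
    sq_abs] at hsq
  rw [← mul_le_mul_iff_of_pos_left hL]
  field_simp
  nlinarith

theorem inner_ge_of_inner_sub_nonneg {L : ℝ} (hL : 0 < L) (α : ℝ) {d f g : Z}
    (hf : ⟪f, d⟫ ≥ (1 / L) * ‖f‖ ^ 2) (hg : 0 ≤ ⟪g - f, d - α • g⟫) :
    ⟪g, d⟫ ≥ (α * (4 - α * L) / 4) * ‖g‖ ^ 2 := by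
  rw [inner_sub_left, inner_sub_right, inner_sub_right, real_inner_smul_right,
    real_inner_smul_right, real_inner_self_eq_norm_sq] at hg
  have hyoung := mul_inner_le_inv_mul_norm_sq_add hL α f g
  linarith

end

theorem stmt_12_general {Z : Type*} [NormedAddCommGroup Z] [InnerProductSpace ℝ Z]
    (L : ℝ) (hL : 0 < L) (F : Z → Z)
    (hF : ∀ z₁ z₂ : Z, ⟪F z₁ - F z₂, z₁ - z₂⟫ ≥ (1 / L) * ‖F z₁ - F z₂‖ ^ 2)
    (J : Z → Z)
    (hJ : ∀ x y : Z, ⟪J x - J y, x - y⟫ ≥ ‖J x - J y‖ ^ 2)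
    (α : ℝ) (hα : 0 < α)
    (G : Z → Z) (hGdef : ∀ z, G z = (1 / α) • (z - J (z - α • F z))) :
    ∀ z₁ z₂ : Z, ⟪G z₁ - G z₂, z₁ - z₂⟫ ≥ (α * (4 - α * L) / 4) * ‖G z₁ - G z₂‖ ^ 2 :=
  fun z₁ z₂ =>
    inner_ge_of_inner_sub_nonneg hL α (hF z₁ z₂) (inner_forwardBackward_nonneg hJ hα hGdef z₁ z₂)

/-- Co-coerciveness of `G(z) = (1/α)(z - J(z - αF(z)))`, where `J = J_{αE}` is the
resolvent of a maximal monotone operator, hence firmly nonexpansive. -/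
theorem stmt_12 {Z : Type*} [NormedAddCommGroup Z] [InnerProductSpace ℝ Z]
    [CompleteSpace Z]
    (L : ℝ) (hL : 0 < L) (F : Z → Z)
    (hF : ∀ z₁ z₂ : Z, ⟪F z₁ - F z₂, z₁ - z₂⟫ ≥ (1 / L) * ‖F z₁ - F z₂‖ ^ 2)
    (J : Z → Z)
    (hJ : ∀ x y : Z, ⟪J x - J y, x - y⟫ ≥ ‖J x - J y‖ ^ 2)
    (α : ℝ) (hα : 0 < α) (hα' : α < 4 / L)
    (G : Z → Z) (hGdef : ∀ z, G z = (1 / α) • (z - J (z - α • F z))) :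
    ∀ z₁ z₂ : Z, ⟪G z₁ - G z₂, z₁ - z₂⟫ ≥ (α * (4 - α * L) / 4) * ‖G z₁ - G z₂‖ ^ 2 :=
  stmt_12_general L hL F hF J hJ α hα G hGdef
end

section
/- If f : X → ℝ is convex, differentiable, and L-smooth (‖∇f(x₁) - ∇f(x₂)‖ ≤ L‖x₁ - x₂‖ for all x₁, x₂), then ∇f is (1/L)-co-coercive: ⟨∇f(x₁) - ∇f(x₂), x₁ - x₂⟩ ≥ (1/L)‖∇f(x₁) - ∇f(x₂)‖² for all x₁, x₂ ∈ X. -/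
/-!
Convexity at `x` and the quadratic upper bound (descent lemma) at `y`, both evaluated at the
gradient step `z = y - L⁻¹ • (∇f y - ∇f x)`, give
`f x + ⟪∇f x, y - x⟫ + ‖∇f y - ∇f x‖² / (2L) ≤ f y`.
Adding this to the same inequality with `x` and `y` exchanged yields co-coercivity.
-/

open scoped RealInnerProductSpace
open Set

theorem image_one_le_of_deriv_le_add_mul {g g' : ℝ → ℝ} {C : ℝ}
    (hg : ∀ t, HasDerivAt g (g' t) t) (hg' : ∀ t ∈ Ico (0 : ℝ) 1, g' t ≤ g' 0 + C * t) :
    g 1 ≤ g 0 + g' 0 + C / 2 := by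
  have hB : ∀ t, HasDerivAt (fun t => g 0 + g' 0 * t + C / 2 * t ^ 2) (g' 0 + C * t) t := by
    intro t
    refine ((((hasDerivAt_id t).const_mul (g' 0)).const_add (g 0)).add
      ((hasDerivAt_pow 2 t).const_mul (C / 2))).congr_deriv ?_
    simp only [Nat.cast_ofNat]
    ring
  have := image_le_of_deriv_right_le_deriv_boundary (a := 0) (b := 1)
    (fun t _ => (hg t).continuousAt.continuousWithinAt) (fun t _ => (hg t).hasDerivWithinAt)
    (B := fun t => g 0 + g' 0 * t + C / 2 * t ^ 2) (by simp)
    (fun t _ => (hB t).continuousAt.continuousWithinAt) (fun t _ => (hB t).hasDerivWithinAt) hg'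
    (right_mem_Icc.2 zero_le_one)
  simpa using this

section InnerProductSpace

variable {X : Type*} [NormedAddCommGroup X] [InnerProductSpace ℝ X] [CompleteSpace X]

theorem HasGradientAt.hasDerivAt_comp_add_smul {f : X → ℝ} {g x v : X} {t : ℝ}
    (hf : HasGradientAt f g (x + t • v)) :
    HasDerivAt (fun s : ℝ => f (x + s • v)) ⟪g, v⟫ t := by
  have hline : HasDerivAt (fun s : ℝ => x + s • v) v t := by
    simpa using ((hasDerivAt_id t).smul_const v).const_add x
  have := (hasGradientAt_iff_hasFDerivAt.mp hf).comp_hasDerivAt t hline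
  simp only [InnerProductSpace.toDual_apply_apply] at this
  exact this

theorem ConvexOn.add_inner_sub_le_of_hasGradientAt {s : Set X} {f : X → ℝ} {g x y : X}
    (hconv : ConvexOn ℝ s f) (hx : x ∈ s) (hy : y ∈ s) (hf : HasGradientAt f g x) :
    f x + ⟪g, y - x⟫ ≤ f y := by
  have hline : ConvexOn ℝ (Icc 0 1) (fun t : ℝ => f (x + t • (y - x))) := by
    have hcomp : f ∘ AffineMap.lineMap x y = fun t : ℝ => f (x + t • (y - x)) := by
      funext t
      simp [AffineMap.lineMap_apply, add_comm]
    refine hcomp ▸ (hconv.comp_affineMap (AffineMap.lineMap x y)).subset ?_ (convex_Icc 0 1)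
    intro t ht
    simpa [AffineMap.lineMap_apply, add_comm] using hconv.1.lineMap_mem hx hy ht
  have hderiv := HasGradientAt.hasDerivAt_comp_add_smul (v := y - x) (t := 0) (by simpa using hf)
  have := hline.le_slope_of_hasDerivAt (left_mem_Icc.2 zero_le_one)
    (right_mem_Icc.2 zero_le_one) one_pos hderiv
  simp only [slope_def_field, one_smul, add_sub_cancel, zero_smul, add_zero, sub_zero,
    div_one] at this
  linarith

theorem le_add_inner_sub_add_sq_of_lipschitz_gradient {f : X → ℝ} {f' : X → X} {L : ℝ} {x : X}
    (hf : ∀ z, HasGradientAt f (f' z) z) (hf' : ∀ z, ‖f' z - f' x‖ ≤ L * ‖z - x‖) (y : X) :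
    f y ≤ f x + ⟪f' x, y - x⟫ + L / 2 * ‖y - x‖ ^ 2 := by
  have key := image_one_le_of_deriv_le_add_mul (g := fun t : ℝ => f (x + t • (y - x)))
    (C := L * ‖y - x‖ ^ 2) (fun t => (hf _).hasDerivAt_comp_add_smul) fun t ht => by
      have hcs := real_inner_le_norm (f' (x + t • (y - x)) - f' x) (y - x)
      have hlip := hf' (x + t • (y - x))
      simp only [add_sub_cancel_left, norm_smul, Real.norm_eq_abs, abs_of_nonneg ht.1] at hlip
      rw [inner_sub_left] at hcs
      simp only [zero_smul, add_zero]
      nlinarith [norm_nonneg (y - x)]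
  simp only [zero_smul, add_zero, one_smul, add_sub_cancel] at key
  linarith

theorem ConvexOn.add_inner_sub_add_sq_norm_gradient_sub_le {f : X → ℝ} {f' : X → X} {L : ℝ}
    (hconv : ConvexOn ℝ univ f) (hf : ∀ z, HasGradientAt f (f' z) z)
    (hf' : ∀ a b, ‖f' a - f' b‖ ≤ L * ‖a - b‖) (x y : X) :
    f x + ⟪f' x, y - x⟫ + (2 * L)⁻¹ * ‖f' y - f' x‖ ^ 2 ≤ f y := by
  set d := f' y - f' x
  set z := y - L⁻¹ • d
  have hlower := hconv.add_inner_sub_le_of_hasGradientAt (mem_univ x) (mem_univ z) (hf x)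
  have hupper := le_add_inner_sub_add_sq_of_lipschitz_gradient hf (fun w => hf' w y) z
  have hzy : z - y = -(L⁻¹ • d) := by simp [z]
  have hzx : z - x = (y - x) + (z - y) := by abel
  have hinner : ⟪d, z - y⟫ = -(2 * ((2 * L)⁻¹ * ‖d‖ ^ 2)) := by
    rw [hzy, inner_neg_right, real_inner_smul_right, real_inner_self_eq_norm_sq]
    ring
  have hnorm : L / 2 * ‖z - y‖ ^ 2 = (2 * L)⁻¹ * ‖d‖ ^ 2 := by
    have hscalar : L / 2 * L⁻¹ ^ 2 = (2 * L)⁻¹ := by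
      rcases eq_or_ne L 0 with rfl | hL
      · simp
      · field_simp
    rw [hzy, norm_neg, norm_smul, mul_pow, Real.norm_eq_abs, sq_abs, ← mul_assoc, hscalar]
  rw [hzx, inner_add_right] at hlower
  have hsplit : ⟪f' y, z - y⟫ = ⟪f' x, z - y⟫ + ⟪d, z - y⟫ := by
    rw [← inner_add_left, add_sub_cancel]
  linarith

end InnerProductSpace

theorem stmt_13_general {X : Type*} [NormedAddCommGroup X] [InnerProductSpace ℝ X]
    [FiniteDimensional ℝ X]
    (L : ℝ) (f : X → ℝ) (f' : X → X)
    (hconv : ConvexOn ℝ Set.univ f)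
    (hdiff : ∀ x, HasGradientAt f (f' x) x)
    (hsmooth : ∀ x₁ x₂ : X, ‖f' x₁ - f' x₂‖ ≤ L * ‖x₁ - x₂‖) :
    ∀ x₁ x₂ : X, ⟪f' x₁ - f' x₂, x₁ - x₂⟫ ≥ (1 / L) * ‖f' x₁ - f' x₂‖ ^ 2 := by
  intro x₁ x₂
  have h₁₂ := hconv.add_inner_sub_add_sq_norm_gradient_sub_le hdiff hsmooth x₁ x₂
  have h₂₁ := hconv.add_inner_sub_add_sq_norm_gradient_sub_le hdiff hsmooth x₂ x₁
  rw [norm_sub_rev] at h₁₂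
  have hsplit : ⟪f' x₁ - f' x₂, x₁ - x₂⟫ = -⟪f' x₁, x₂ - x₁⟫ - ⟪f' x₂, x₁ - x₂⟫ := by
    rw [inner_sub_left, ← inner_neg_right, neg_sub]
  have hL : 1 / L = 2 * (2 * L)⁻¹ := by ring
  rw [hsplit, hL]
  linarith

theorem stmt_13 {X : Type*} [NormedAddCommGroup X] [InnerProductSpace ℝ X]
    [FiniteDimensional ℝ X]
    (L : ℝ) (hL : 0 < L) (f : X → ℝ) (f' : X → X)
    (hconv : ConvexOn ℝ Set.univ f)
    (hdiff : ∀ x, HasGradientAt f (f' x) x)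
    (hsmooth : ∀ x₁ x₂ : X, ‖f' x₁ - f' x₂‖ ≤ L * ‖x₁ - x₂‖) :
    ∀ x₁ x₂ : X, ⟪f' x₁ - f' x₂, x₁ - x₂⟫ ≥ (1 / L) * ‖f' x₁ - f' x₂‖ ^ 2 :=
  stmt_13_general L f f' hconv hdiff hsmooth
end

section
/- Let ε > 0 and a > 0, and define σ_k := ε/(k+1)^a, p_k := 1 - (k/(k+1))^{2a} / (2 - (k/(k+1))^{2a+1}) for k ≥ 1 with p_0 = 1. Suppose a sequence of nonnegative reals v_k satisfies v_0 ≤ ε²/2 and, for k ≥ 1, v_k ≤ p_k ε²/(2(k+1)^{2a}) + (1 - p_k)(v_{k-1} + ε²/(2(k+1)^{2a+1})). Then v_k ≤ σ_k² = ε²/(k+1)^{2a} for all k ≥ 0. -/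
/-!
Write `r = k/(k+1)`, `R = r^(2a)` and `S = ε²/(k+1)^(2a)`, so that the previous target is
`ε²/k^(2a) = S/R` and the extra term is `ε²/(2(k+1)^(2a+1)) = (1-r) S/2`. The mixing weight
`1 - p_k = R/(2 - R r)` is exactly the one for which the bound `p_k S/2 + (1 - p_k)(v + (1-r) S/2)`
equals `S` at `v = S/R`; since that weight is nonnegative the bound is monotone in `v`, and
induction on `k` closes the argument.
-/

lemma page_weight_fixed_point {R r S : ℝ} (hR : R ≠ 0) (hRr : R * r ≠ 2) :
    (1 - R / (2 - R * r)) * S / 2 + R / (2 - R * r) * (S / R + (1 - r) * S / 2) = S := by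
  have hD : 2 - R * r ≠ 0 := sub_ne_zero.mpr (Ne.symm hRr)
  field_simp
  ring

lemma le_of_page_step {R r S q u w : ℝ} (hR : 0 < R) (hRr : R * r < 2)
    (hq : q = R / (2 - R * r)) (hu : u ≤ S / R)
    (hw : w ≤ (1 - q) * S / 2 + q * (u + (1 - r) * S / 2)) : w ≤ S := by
  have hq0 : 0 ≤ q := hq ▸ div_nonneg hR.le (by linarith)
  calc w ≤ (1 - q) * S / 2 + q * (u + (1 - r) * S / 2) := hw
    _ ≤ (1 - q) * S / 2 + q * (S / R + (1 - r) * S / 2) := by gcongr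
    _ = S := hq ▸ page_weight_fixed_point hR.ne' hRr.ne

lemma page_variance_step {ε a x p u w : ℝ} (ha : 0 ≤ a) (hx : 0 < x)
    (hp : p = 1 - (x / (x + 1)) ^ (2 * a) / (2 - (x / (x + 1)) ^ (2 * a + 1)))
    (hu : u ≤ ε ^ 2 / x ^ (2 * a))
    (hw : w ≤ p * ε ^ 2 / (2 * (x + 1) ^ (2 * a)) +
      (1 - p) * (u + ε ^ 2 / (2 * (x + 1) ^ (2 * a + 1)))) :
    w ≤ ε ^ 2 / (x + 1) ^ (2 * a) := by
  set r := x / (x + 1) with hr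
  have hx1 : 0 < x + 1 := by linarith
  have hr0 : 0 < r := by positivity
  have hr1 : r < 1 := (div_lt_one hx1).mpr (by linarith)
  have hR : 0 < r ^ (2 * a) := by positivity
  have hR1 : r ^ (2 * a) ≤ 1 := Real.rpow_le_one hr0.le hr1.le (by linarith)
  have hx1a : 0 < (x + 1) ^ (2 * a) := by positivity
  have hRr : r ^ (2 * a) * r < 2 := by nlinarith
  have hfresh : (1 - (1 - p)) * (ε ^ 2 / (x + 1) ^ (2 * a)) / 2 =
      p * ε ^ 2 / (2 * (x + 1) ^ (2 * a)) := by
    ring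
  have hextra : (1 - r) * (ε ^ 2 / (x + 1) ^ (2 * a)) / 2 =
      ε ^ 2 / (2 * (x + 1) ^ (2 * a + 1)) := by
    rw [hr, Real.rpow_add_one hx1.ne']
    field_simp
    ring
  refine le_of_page_step (r := r) (q := 1 - p) (u := u) hR hRr ?_ ?_ ?_
  · rw [hp, Real.rpow_add_one hr0.ne']
    ring
  · rwa [hr, Real.div_rpow hx.le hx1.le, div_div_div_cancel_right₀ hx1a.ne']
  · rwa [hfresh, hextra]

theorem stmt_17_general (ε a : ℝ) (ha : 0 < a)
    (p v : ℕ → ℝ)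
    (hp : ∀ k : ℕ, 1 ≤ k →
      p k = 1 - ((k : ℝ) / ((k : ℝ) + 1)) ^ (2 * a) /
        (2 - ((k : ℝ) / ((k : ℝ) + 1)) ^ (2 * a + 1)))
    (hv0 : v 0 ≤ ε ^ 2 / 2)
    (hvrec : ∀ k : ℕ, 1 ≤ k →
      v k ≤ p k * ε ^ 2 / (2 * ((k : ℝ) + 1) ^ (2 * a)) +
        (1 - p k) * (v (k - 1) + ε ^ 2 / (2 * ((k : ℝ) + 1) ^ (2 * a + 1)))) :
    ∀ k : ℕ, v k ≤ ε ^ 2 / ((k : ℝ) + 1) ^ (2 * a) := by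
  intro k
  induction k with
  | zero =>
    simp only [Nat.cast_zero, zero_add, Real.one_rpow, div_one]
    linarith [sq_nonneg ε]
  | succ k ih =>
    have hrec := hvrec (k + 1) (Nat.le_add_left 1 k)
    have hpk := hp (k + 1) (Nat.le_add_left 1 k)
    push_cast at hrec hpk ⊢
    exact page_variance_step ha.le (by positivity) hpk ih hrec

theorem stmt_17 (ε a : ℝ) (hε : 0 < ε) (ha : 0 < a)
    (p v : ℕ → ℝ) (hp0 : p 0 = 1)
    (hp : ∀ k : ℕ, 1 ≤ k →
      p k = 1 - ((k : ℝ) / ((k : ℝ) + 1)) ^ (2 * a) /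
        (2 - ((k : ℝ) / ((k : ℝ) + 1)) ^ (2 * a + 1)))
    (hv : ∀ k, 0 ≤ v k)
    (hv0 : v 0 ≤ ε ^ 2 / 2)
    (hvrec : ∀ k : ℕ, 1 ≤ k →
      v k ≤ p k * ε ^ 2 / (2 * ((k : ℝ) + 1) ^ (2 * a)) +
        (1 - p k) * (v (k - 1) + ε ^ 2 / (2 * ((k : ℝ) + 1) ^ (2 * a + 1)))) :
    ∀ k : ℕ, v k ≤ ε ^ 2 / ((k : ℝ) + 1) ^ (2 * a) :=
  stmt_17_general ε a ha p v hp hv0 hvrec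
end
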